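/- arXiv:2010.12088 — 2 statements merged into one kernel-verified Lean document; each statement's English description precedes it below -/
import Mathlib

section
/- Let α = φ_D(x) and α̃ = φ_D(x+v) be Lasso minimizers with the same dictionary D on inputs x and x+v, where ‖v‖₂ ≤ ν. Then ‖Dα − Dα̃‖₂ ≤ ν. -/
open scoped BigOperators
open Finset

noncomputable def l2 {n : ℕ} (x : Fin n → ℝ) : ℝ := Real.sqrt (∑ i, (x i) ^ 2)

noncomputable def l1 {n : ℕ} (x : Fin n → ℝ) : ℝ := ∑ i, |x i|

noncomputable def inp {n : ℕ} (x y : Fin n → ℝ) : ℝ := ∑ i, x i * y i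

/-- The Lasso objective `z ↦ (1/2)‖x − Dz‖₂² + λ‖z‖₁`. -/
noncomputable def lassoObj {d p : ℕ} (D : Matrix (Fin d) (Fin p) ℝ) (lam : ℝ)
    (x : Fin d → ℝ) (z : Fin p → ℝ) : ℝ :=
  (1 / 2) * (l2 (x - D.mulVec z)) ^ 2 + lam * l1 z

open Filter Topology Set

/-! If `α` minimizes `z ↦ ½‖x − A z‖² + R z` with `R` convex, then moving from `α`
towards any `z` cannot decrease the objective; to first order in the step this is the
variational inequality `⟪x − A α, A z − A α⟫ ≤ R z − R α`. Writing it for the minimizers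
`α` at `x` and `α'` at `x'`, each tested against the other, and adding, the penalty terms
cancel and leave `‖A α' − A α‖² ≤ ⟪x' − x, A α' − A α⟫`, so Cauchy–Schwarz gives
`‖A α − A α'‖ ≤ ‖x' − x‖`.
The Lasso is the case `A = D`, `R = λ‖·‖₁`. -/

lemma nonneg_of_forall_mem_Ioc_nonneg_add_mul {c K : ℝ}
    (h : ∀ t ∈ Ioc (0 : ℝ) 1, 0 ≤ c + t * K) : 0 ≤ c := by
  have hlim : Tendsto (fun t : ℝ => c + t * K) (𝓝[>] 0) (𝓝 c) := by
    have : Continuous fun t : ℝ => c + t * K := by fun_prop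
    simpa using (this.tendsto 0).mono_left nhdsWithin_le_nhds
  exact ge_of_tendsto hlim (eventually_of_mem (Ioc_mem_nhdsGT zero_lt_one) h)

section PenalizedLeastSquares

variable {V E : Type*} [AddCommGroup V] [Module ℝ V]
  [NormedAddCommGroup E] [InnerProductSpace ℝ E]
  (A : V →ₗ[ℝ] E) (R : V → ℝ)

noncomputable def penalizedLeastSquares (x : E) (z : V) : ℝ := 1 / 2 * ‖x - A z‖ ^ 2 + R z

variable {A R}

lemma inner_le_of_penalizedLeastSquares_min (hR : ConvexOn ℝ univ R) {x : E} {α : V}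
    (hα : ∀ z, penalizedLeastSquares A R x α ≤ penalizedLeastSquares A R x z) (z : V) :
    inner ℝ (x - A α) (A z - A α) ≤ R z - R α := by
  set r := x - A α
  set w := A z - A α
  suffices 0 ≤ R z - R α - inner ℝ r w by linarith
  refine nonneg_of_forall_mem_Ioc_nonneg_add_mul (K := ‖w‖ ^ 2 / 2) fun t ⟨ht0, ht1⟩ => ?_
  have hconv : R ((1 - t) • α + t • z) ≤ (1 - t) * R α + t * R z :=
    hR.2 trivial trivial (by linarith) ht0.le (by ring)
  have hres : x - A ((1 - t) • α + t • z) = r - t • w := by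
    simp only [map_add, map_smul, r, w]; module
  have hexp : ‖r - t • w‖ ^ 2 = ‖r‖ ^ 2 - 2 * t * inner ℝ r w + t ^ 2 * ‖w‖ ^ 2 := by
    rw [norm_sub_sq_real, inner_smul_right, norm_smul, Real.norm_eq_abs, abs_of_pos ht0]; ring
  have hmin := hα ((1 - t) • α + t • z)
  rw [penalizedLeastSquares, penalizedLeastSquares, hres, hexp] at hmin
  have : 0 ≤ t * (R z - R α - inner ℝ r w + t * (‖w‖ ^ 2 / 2)) := by nlinarith
  exact (mul_nonneg_iff_of_pos_left ht0).1 this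

lemma norm_map_sub_le_of_penalizedLeastSquares_min (hR : ConvexOn ℝ univ R)
    {x x' : E} {α α' : V}
    (hα : ∀ z, penalizedLeastSquares A R x α ≤ penalizedLeastSquares A R x z)
    (hα' : ∀ z, penalizedLeastSquares A R x' α' ≤ penalizedLeastSquares A R x' z) :
    ‖A α - A α'‖ ≤ ‖x' - x‖ := by
  have h := inner_le_of_penalizedLeastSquares_min hR hα α'
  have h' := inner_le_of_penalizedLeastSquares_min hR hα' α
  have hsq : ‖A α' - A α‖ ^ 2 ≤ inner ℝ (x' - x) (A α' - A α) := by
    have : inner ℝ (x - A α) (A α' - A α) + inner ℝ (x' - A α') (A α - A α')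
        = ‖A α' - A α‖ ^ 2 - inner ℝ (x' - x) (A α' - A α) := by
      rw [← real_inner_self_eq_norm_sq, ← neg_sub (A α') (A α), inner_neg_right,
        ← sub_eq_add_neg, ← inner_sub_left, ← inner_sub_left]
      congr 1; abel
    linarith
  have hcs := real_inner_le_norm (x' - x) (A α' - A α)
  rw [norm_sub_rev]
  nlinarith [norm_nonneg (A α' - A α), norm_nonneg (x' - x)]

end PenalizedLeastSquares

section Lasso

variable {n : ℕ}

lemma l2_eq_norm (x : Fin n → ℝ) : l2 x = ‖WithLp.toLp 2 x‖ := by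
  simp [l2, EuclideanSpace.norm_eq]

lemma l1_eq_norm (x : Fin n → ℝ) : l1 x = ‖WithLp.toLp 1 x‖ := by
  simp [l1, PiLp.norm_eq_of_L1]

lemma convexOn_l1 : ConvexOn ℝ univ (l1 : (Fin n → ℝ) → ℝ) := by
  have := (convexOn_norm convex_univ).comp_linearMap
    (WithLp.linearEquiv 1 ℝ (Fin n → ℝ)).symm.toLinearMap
  simpa [Function.comp_def, ← l1_eq_norm] using this

noncomputable def Matrix.euclideanMulVecLin {m k : Type*} [Fintype k] (D : Matrix m k ℝ) :
    (k → ℝ) →ₗ[ℝ] EuclideanSpace ℝ m :=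
  (WithLp.linearEquiv 2 ℝ (m → ℝ)).symm.toLinearMap ∘ₗ D.mulVecLin

lemma lassoObj_eq_penalizedLeastSquares {d p : ℕ} (D : Matrix (Fin d) (Fin p) ℝ) (lam : ℝ)
    (x : Fin d → ℝ) :
    lassoObj D lam x =
      penalizedLeastSquares D.euclideanMulVecLin (fun z => lam * l1 z) (WithLp.toLp 2 x) := by
  ext z
  simp [lassoObj, penalizedLeastSquares, Matrix.euclideanMulVecLin, l2_eq_norm]

end Lasso

theorem stmt8_general {d p : ℕ} (D : Matrix (Fin d) (Fin p) ℝ) (lam ν : ℝ)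
    (hlam : 0 < lam)
    (x v : Fin d → ℝ) (hv : l2 v ≤ ν)
    (α : Fin p → ℝ) (hmin : ∀ z, lassoObj D lam x α ≤ lassoObj D lam x z)
    (αt : Fin p → ℝ) (hmint : ∀ z, lassoObj D lam (x + v) αt ≤ lassoObj D lam (x + v) z) :
    l2 (D.mulVec α - D.mulVec αt) ≤ ν := by
  have hR : ConvexOn ℝ univ fun z : Fin p → ℝ => lam * l1 z := convexOn_l1.smul hlam.le
  simp only [lassoObj_eq_penalizedLeastSquares] at hmin hmint
  calc l2 (D.mulVec α - D.mulVec αt)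
      = ‖D.euclideanMulVecLin α - D.euclideanMulVecLin αt‖ := by
        simp [l2_eq_norm, Matrix.euclideanMulVecLin]
    _ ≤ ‖WithLp.toLp 2 (x + v) - WithLp.toLp 2 x‖ :=
        norm_map_sub_le_of_penalizedLeastSquares_min hR hmin hmint
    _ = l2 v := by rw [l2_eq_norm, ← WithLp.toLp_sub, add_sub_cancel_left]
    _ ≤ ν := hv

/-- norm stability of the Lasso reconstruction under adversarial
perturbations of the input. -/
theorem stmt8 {d p : ℕ} (D : Matrix (Fin d) (Fin p) ℝ) (lam ν : ℝ)
    (hlam : 0 < lam) (hν : 0 ≤ ν)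
    (x v : Fin d → ℝ) (hv : l2 v ≤ ν)
    (α : Fin p → ℝ) (hmin : ∀ z, lassoObj D lam x α ≤ lassoObj D lam x z)
    (αt : Fin p → ℝ) (hmint : ∀ z, lassoObj D lam (x + v) αt ≤ lassoObj D lam (x + v) z) :
    l2 (D.mulVec α - D.mulVec αt) ≤ ν :=
  stmt8_general D lam ν hlam x v hv α hmin αt hmint
end

section
/- Let α = φ_D(x) be a Lasso minimizer, and suppose there is a set I of p−s coordinates with |⟨D_i, x − Dα⟩| < λ − τ_s for all i ∈ I, where τ_s > 2ν. Then for any perturbation v with ‖v‖₂ ≤ ν, the Lasso minimizer α̃ = φ_D(x+v) satisfies α̃_i = 0 for all i ∈ I. -/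
open scoped BigOperators
open Finset

/-! The coordinatewise optimality conditions of the Lasso say that the correlations
`c = Dᵀ(b - Dα)` with the residual satisfy `|c_j| ≤ λ` and `c_j α_j = λ|α_j|`. They make the map
`α ↦ c` monotone, and since `c - c̃ = -Dᵀ(v + D(α - α̃))` this gives
`‖D(α - α̃)‖² ≤ -⟨v, D(α - α̃)⟩`: the fit moves by at most `‖v‖ ≤ ν`. Hence
`|c̃_i| ≤ |c_i| + 2ν < λ` on `I`, which rules out `α̃_i ≠ 0`. -/

open Matrix

lemma inp_eq_dotProduct {n : ℕ} (x y : Fin n → ℝ) : inp x y = x ⬝ᵥ y := rfl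

lemma l2_nonneg {n : ℕ} (x : Fin n → ℝ) : 0 ≤ l2 x := Real.sqrt_nonneg _

lemma l2_sq {n : ℕ} (x : Fin n → ℝ) : l2 x ^ 2 = x ⬝ᵥ x := by
  rw [l2, Real.sq_sqrt (by positivity)]
  simp only [dotProduct, sq]

lemma abs_inp_le_l2_mul_l2 {n : ℕ} (x y : Fin n → ℝ) : |inp x y| ≤ l2 x * l2 y := by
  rw [l2, l2, ← Real.sqrt_mul (by positivity)]
  exact Real.abs_le_sqrt (Finset.sum_mul_sq_le_sq_mul_sq _ _ _)

lemma l1_add_single {n : ℕ} (a : Fin n → ℝ) (j : Fin n) (t : ℝ) :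
    l1 (a + Pi.single j t) = l1 a + (|a j + t| - |a j|) := by
  rw [l1, l1, ← Finset.sum_erase_add _ _ (Finset.mem_univ j),
    ← Finset.sum_erase_add _ _ (Finset.mem_univ j)]
  have hoff : ∀ k ∈ Finset.univ.erase j, |(a + Pi.single j t : Fin n → ℝ) k| = |a k| :=
    fun k hk => by simp [Finset.ne_of_mem_erase hk]
  rw [Finset.sum_congr rfl hoff]
  simp only [Pi.add_apply, Pi.single_eq_same]
  ring

lemma abs_le_of_forall_mul_le {a c lam : ℝ} (hlam : 0 ≤ lam)
    (h : ∀ t, t * c ≤ t ^ 2 / 2 + lam * (|a + t| - |a|)) : |c| ≤ lam := by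
  have key : ∀ t, t * c ≤ t ^ 2 / 2 + lam * |t| := fun t =>
    (h t).trans (by gcongr; linarith [abs_add_le a t])
  have h₁ := key (c - lam)
  have h₂ := key (c + lam)
  rw [abs_le]
  constructor
  · by_contra! hc
    rw [abs_of_neg (by linarith)] at h₂
    nlinarith
  · by_contra! hc
    rw [abs_of_pos (by linarith)] at h₁
    nlinarith

lemma mul_eq_mul_abs_of_forall_mul_le {a c lam : ℝ}
    (h : ∀ t, t * c ≤ t ^ 2 / 2 + lam * (|a + t| - |a|)) : c * a = lam * |a| := by
  have hderiv := ((hasDerivAt_id (0 : ℝ)).mul_const (c * a - lam * |a|)).sub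
    ((hasDerivAt_pow 2 (0 : ℝ)).mul_const (a ^ 2 / 2))
  -- scaling `a` by `1 + s`, `|s| < 1`, in `h` shows that `0` is a local maximum
  have hmax : IsLocalMax (fun s => id s * (c * a - lam * |a|) - s ^ 2 * (a ^ 2 / 2)) 0 := by
    filter_upwards [Ioo_mem_nhds (neg_one_lt_zero : (-1 : ℝ) < 0) one_pos] with s hs
    have h' := h (s * a)
    rw [show a + s * a = (1 + s) * a by ring, abs_mul, abs_of_pos (by linarith [hs.1])] at h'
    simp only [id]
    nlinarith
  linarith [show c * a - lam * |a| = 0 by simpa using hmax.hasDerivAt_eq_zero hderiv]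

lemma sub_mul_sub_nonneg_of_abs_le {lam c c' a a' : ℝ} (hc : |c| ≤ lam) (hc' : |c'| ≤ lam)
    (ha : c * a = lam * |a|) (ha' : c' * a' = lam * |a'|) : 0 ≤ (c - c') * (a - a') := by
  have h₁ : c * a' ≤ lam * |a'| :=
    (le_abs_self _).trans (by rw [abs_mul]; exact mul_le_mul_of_nonneg_right hc (abs_nonneg _))
  have h₂ : c' * a ≤ lam * |a| :=
    (le_abs_self _).trans (by rw [abs_mul]; exact mul_le_mul_of_nonneg_right hc' (abs_nonneg _))
  nlinarith

section Lasso

variable {d p : ℕ} (D : Matrix (Fin d) (Fin p) ℝ) (lam : ℝ)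

lemma transpose_mulVec_apply (w : Fin d → ℝ) (j : Fin p) :
    (Dᵀ *ᵥ w) j = inp (fun r => D r j) w := rfl

lemma lassoObj_add_single (b : Fin d → ℝ) (a : Fin p → ℝ) (j : Fin p) (t : ℝ) :
    lassoObj D lam b (a + Pi.single j t) = lassoObj D lam b a
      - t * (Dᵀ *ᵥ (b - D *ᵥ a)) j + t ^ 2 / 2 * l2 (fun r => D r j) ^ 2
      + lam * (|a j + t| - |a j|) := by
  have hres : b - D *ᵥ (a + Pi.single j t) = (b - D *ᵥ a) - t • (fun r => D r j) := by
    ext r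
    simp only [mulVec_add, mulVec_single, op_smul_eq_smul, Pi.sub_apply, Pi.add_apply,
      Pi.smul_apply, col_apply, smul_eq_mul]
    ring
  rw [lassoObj, lassoObj, hres, l1_add_single, l2_sq, l2_sq, l2_sq, transpose_mulVec_apply,
    inp_eq_dotProduct]
  simp only [sub_dotProduct, dotProduct_sub, dotProduct_smul, smul_dotProduct, smul_eq_mul,
    dotProduct_comm (b - D *ᵥ a)]
  ring

lemma abs_transpose_mulVec_apply_le {j : Fin p} (hcol : l2 (fun r => D r j) = 1)
    (w : Fin d → ℝ) : |(Dᵀ *ᵥ w) j| ≤ l2 w := by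
  rw [transpose_mulVec_apply, ← one_mul (l2 w), ← hcol]
  exact abs_inp_le_l2_mul_l2 _ w

variable {D lam} {b : Fin d → ℝ} {a : Fin p → ℝ}

lemma lasso_coord_ineq (hmin : ∀ z, lassoObj D lam b a ≤ lassoObj D lam b z) {j : Fin p}
    (hcol : l2 (fun r => D r j) = 1) (t : ℝ) :
    t * (Dᵀ *ᵥ (b - D *ᵥ a)) j ≤ t ^ 2 / 2 + lam * (|a j + t| - |a j|) := by
  have := hmin (a + Pi.single j t)
  rw [lassoObj_add_single, hcol] at this
  linarith

lemma abs_corr_le (hlam : 0 ≤ lam) (hmin : ∀ z, lassoObj D lam b a ≤ lassoObj D lam b z)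
    {j : Fin p} (hcol : l2 (fun r => D r j) = 1) : |(Dᵀ *ᵥ (b - D *ᵥ a)) j| ≤ lam :=
  abs_le_of_forall_mul_le hlam (lasso_coord_ineq hmin hcol)

lemma corr_mul_eq (hmin : ∀ z, lassoObj D lam b a ≤ lassoObj D lam b z)
    {j : Fin p} (hcol : l2 (fun r => D r j) = 1) :
    (Dᵀ *ᵥ (b - D *ᵥ a)) j * a j = lam * |a j| :=
  mul_eq_mul_abs_of_forall_mul_le (lasso_coord_ineq hmin hcol)

lemma le_abs_corr_of_ne_zero (hmin : ∀ z, lassoObj D lam b a ≤ lassoObj D lam b z)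
    {j : Fin p} (hcol : l2 (fun r => D r j) = 1) (ha : a j ≠ 0) :
    lam ≤ |(Dᵀ *ᵥ (b - D *ᵥ a)) j| := by
  have h := corr_mul_eq hmin hcol
  refine le_of_mul_le_mul_right ?_ (abs_pos.mpr ha)
  rw [← h, ← abs_mul]
  exact le_abs_self _

lemma l2_mulVec_sub_le {b' : Fin d → ℝ} {a' : Fin p → ℝ} (hlam : 0 ≤ lam)
    (hcols : ∀ j, l2 (fun r => D r j) = 1)
    (hmin : ∀ z, lassoObj D lam b a ≤ lassoObj D lam b z)
    (hmin' : ∀ z, lassoObj D lam b' a' ≤ lassoObj D lam b' z) :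
    l2 (D *ᵥ a - D *ᵥ a') ≤ l2 (b' - b) := by
  set u := D *ᵥ a - D *ᵥ a'
  set e := b' - b
  have hmono : 0 ≤ (Dᵀ *ᵥ (b - D *ᵥ a) - Dᵀ *ᵥ (b' - D *ᵥ a')) ⬝ᵥ (a - a') :=
    Finset.sum_nonneg fun j _ => sub_mul_sub_nonneg_of_abs_le (abs_corr_le hlam hmin (hcols j))
      (abs_corr_le hlam hmin' (hcols j)) (corr_mul_eq hmin (hcols j)) (corr_mul_eq hmin' (hcols j))
  have hdual : (Dᵀ *ᵥ (b - D *ᵥ a) - Dᵀ *ᵥ (b' - D *ᵥ a')) ⬝ᵥ (a - a') = -(e ⬝ᵥ u) - u ⬝ᵥ u := by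
    rw [← mulVec_sub, mulVec_transpose, ← dotProduct_mulVec, mulVec_sub]
    simp only [u, e, sub_dotProduct, dotProduct_sub]
    ring
  have hcs : -(e ⬝ᵥ u) ≤ l2 e * l2 u := (neg_le_abs _).trans (abs_inp_le_l2_mul_l2 e u)
  rw [← l2_sq] at hdual
  nlinarith [l2_nonneg e, l2_nonneg u]

end Lasso

theorem stmt10_general {d p : ℕ} (D : Matrix (Fin d) (Fin p) ℝ) (lam ν τ : ℝ)
    (hlam : 0 < lam)
    (hcols : ∀ i, l2 (fun r => D r i) = 1)
    (x v : Fin d → ℝ) (hv : l2 v ≤ ν)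
    (α : Fin p → ℝ) (hmin : ∀ z, lassoObj D lam x α ≤ lassoObj D lam x z)
    (αt : Fin p → ℝ) (hmint : ∀ z, lassoObj D lam (x + v) αt ≤ lassoObj D lam (x + v) z)
    (I : Finset (Fin p))
    (hgap : ∀ i ∈ I, |inp (fun r => D r i) (x - D.mulVec α)| < lam - τ)
    (hτ : 2 * ν < τ) :
    ∀ i ∈ I, αt i = 0 := by
  intro i hi
  by_contra hne
  have hfit : l2 (D *ᵥ α - D *ᵥ αt) ≤ l2 v := by
    simpa using l2_mulVec_sub_le hlam.le hcols hmin hmint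
  have hsplit : (Dᵀ *ᵥ (x + v - D *ᵥ αt)) i
      = (Dᵀ *ᵥ (x - D *ᵥ α)) i + (Dᵀ *ᵥ v) i + (Dᵀ *ᵥ (D *ᵥ α - D *ᵥ αt)) i := by
    rw [← Pi.add_apply, ← Pi.add_apply, ← mulVec_add, ← mulVec_add]
    congr 2
    abel
  have hinactive : |(Dᵀ *ᵥ (x - D *ᵥ α)) i| < lam - τ := hgap i hi
  have hactive := le_abs_corr_of_ne_zero hmint (hcols i) hne
  rw [hsplit] at hactive
  linarith [abs_add_three ((Dᵀ *ᵥ (x - D *ᵥ α)) i) ((Dᵀ *ᵥ v) i) ((Dᵀ *ᵥ (D *ᵥ α - D *ᵥ αt)) i),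
    abs_transpose_mulVec_apply_le D (hcols i) v,
    abs_transpose_mulVec_apply_le D (hcols i) (D *ᵥ α - D *ᵥ αt)]

/-- preservation of an inactive set with positive encoder gap under
adversarial perturbations of the input. -/
theorem stmt10 {d p s : ℕ} (hs : s < p) (D : Matrix (Fin d) (Fin p) ℝ) (lam ν τ : ℝ)
    (hlam : 0 < lam) (hν : 0 ≤ ν)
    (hcols : ∀ i, l2 (fun r => D r i) = 1)
    (x v : Fin d → ℝ) (hv : l2 v ≤ ν)
    (α : Fin p → ℝ) (hmin : ∀ z, lassoObj D lam x α ≤ lassoObj D lam x z)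
    (αt : Fin p → ℝ) (hmint : ∀ z, lassoObj D lam (x + v) αt ≤ lassoObj D lam (x + v) z)
    (I : Finset (Fin p)) (hI : I.card = p - s)
    (hgap : ∀ i ∈ I, |inp (fun r => D r i) (x - D.mulVec α)| < lam - τ)
    (hτ : 2 * ν < τ) :
    ∀ i ∈ I, αt i = 0 :=
  stmt10_general D lam ν τ hlam hcols x v hv α hmin αt hmint I hgap hτ
end
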